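/- With the adversary weights w_1, …, w_n defined from a real a > 1 and a string x ∈ {0,1}^n: if x_j = 0 for some index j, then for every index i ≠ j with x_i = 1 one has w_i ≤ a^(-2^{-n}) · w_j; consequently Σ_{i: x_i=1} w_i ≤ n · a^(-2^{-n}) · w_j. -/
import Mathlib


/-- The adversary weights (0-indexed): `advW a x 0 = a^(1/2)` is the weight `w_1`, and the
weight `w_{j+2} = advW a x (j+1)` equals `w_{j+1} · a^(2^{-(j+2)})` if `x_{j+1} = 1`
(i.e. `x j = true` 0-indexed) and `w_{j+1} · a^(-2^{-(j+2)})` otherwise. -/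
noncomputable def advW (a : ℝ) (x : ℕ → Bool) : ℕ → ℝ
  | 0 => a ^ ((2:ℝ)⁻¹)
  | j + 1 => advW a x j * a ^ (if x j then ((2:ℝ) ^ (j + 2))⁻¹ else -((2:ℝ) ^ (j + 2))⁻¹)

noncomputable def advE (x : ℕ → Bool) : ℕ → ℝ
  | 0 => (2:ℝ)⁻¹
  | j + 1 => advE x j + (if x j then ((2:ℝ) ^ (j + 2))⁻¹ else -((2:ℝ) ^ (j + 2))⁻¹)

lemma advW_eq_rpow (a : ℝ) (ha : 0 < a) (x : ℕ → Bool) :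
    ∀ j, advW a x j = a ^ advE x j
  | 0 => by simp [advW, advE]
  | j + 1 => by
    rw [advW, advE, advW_eq_rpow a ha x j, ← Real.rpow_add ha]

lemma advE_drift (x : ℕ → Bool) (i : ℕ) {j : ℕ} (hij : i ≤ j) :
    |advE x j - advE x i| ≤ ((2:ℝ) ^ (i+1))⁻¹ - ((2:ℝ) ^ (j+1))⁻¹ := by
  induction j, hij using Nat.le_induction with
  | base => simp
  | succ j hij ih =>
    have h2 : |(if x j then ((2:ℝ) ^ (j + 2))⁻¹ else -((2:ℝ) ^ (j + 2))⁻¹)|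
        = ((2:ℝ)^(j+2))⁻¹ := by
      split <;> [skip; rw [abs_neg]] <;> rw [abs_of_nonneg (by positivity)]
    have hs : advE x (j+1) - advE x i
        = (advE x j - advE x i) + (if x j then ((2:ℝ) ^ (j + 2))⁻¹ else -((2:ℝ) ^ (j + 2))⁻¹) := by
      rw [advE]; ring
    have habs : |advE x (j+1) - advE x i| ≤ |advE x j - advE x i| + ((2:ℝ)^(j+2))⁻¹ := by
      rw [hs]; exact (abs_add_le _ _).trans_eq (by rw [h2])
    have hfin : |advE x (j+1) - advE x i|
        ≤ ((2:ℝ)^(i+1))⁻¹ - ((2:ℝ)^(j+1))⁻¹ + ((2:ℝ)^(j+2))⁻¹ := by linarith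
    refine hfin.trans (le_of_eq ?_)
    have hp : ((2:ℝ)^(j+1+1)) = 2^(j+1) * 2 := pow_succ 2 (j+1)
    have hb : (0:ℝ) < 2^(j+1) := by positivity
    show ((2:ℝ)^(i+1))⁻¹ - ((2:ℝ)^(j+1))⁻¹ + ((2:ℝ)^(j+2))⁻¹ = ((2:ℝ)^(i+1))⁻¹ - ((2:ℝ)^(j+2))⁻¹
    rw [show (j+2) = (j+1+1) from rfl, hp]
    field_simp
    ring

lemma two_pow_inv_le {m n : ℕ} (h : m ≤ n) : ((2:ℝ)^n)⁻¹ ≤ ((2:ℝ)^m)⁻¹ := by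
  have : (2:ℝ)^m ≤ 2^n := by gcongr; norm_num
  exact inv_anti₀ (by positivity) this

lemma advE_key (x : ℕ → Bool) (n p q : ℕ) (hp : p < n) (hq : q < n) (hpq : q ≠ p)
    (hxp : x p = false) (hxq : x q = true) :
    advE x q + ((2:ℝ)^n)⁻¹ ≤ advE x p := by
  rcases lt_or_gt_of_ne hpq with h | h
  · -- q < p
    have hstep : advE x (q+1) = advE x q + ((2:ℝ)^(q+2))⁻¹ := by rw [advE, hxq]; simp
    have hd := advE_drift x (q+1) (Nat.succ_le_of_lt h)
    have h1 := (abs_le.mp hd).1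
    have h2 : ((2:ℝ)^n)⁻¹ ≤ ((2:ℝ)^(p+1))⁻¹ := two_pow_inv_le hp
    have : advE x (q+1) - ((2:ℝ)^(q+1+1))⁻¹ + ((2:ℝ)^(p+1))⁻¹ ≤ advE x p := by linarith
    rw [hstep] at this
    have hq2 : ((2:ℝ)^(q+1+1))⁻¹ = ((2:ℝ)^(q+2))⁻¹ := rfl
    linarith [this]
  · -- p < q
    have hstep : advE x (p+1) = advE x p - ((2:ℝ)^(p+2))⁻¹ := by rw [advE, hxp]; simp; ring
    have hd := advE_drift x (p+1) (Nat.succ_le_of_lt h)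
    have h1 := (abs_le.mp hd).2
    have h2 : ((2:ℝ)^n)⁻¹ ≤ ((2:ℝ)^(q+1))⁻¹ := two_pow_inv_le hq
    have hq2 : ((2:ℝ)^(p+1+1))⁻¹ = ((2:ℝ)^(p+2))⁻¹ := rfl
    linarith

/-- With the adversary weights `w_1, …, w_n` defined from `a > 1` and `x ∈ {0,1}^n`:
if `x_j = 0` for some index `j`, then for every index `i ≠ j` with `x_i = 1` one has
`w_i ≤ a^(-2^{-n}) · w_j`; consequently `Σ_{i : x_i = 1} w_i ≤ n · a^(-2^{-n}) · w_j`.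
(Stated 0-indexed: the bit `x_j` is `x p` and its weight `w_j` is `advW a x p`.) -/
theorem advW_sum_of_ones_le
    (n : ℕ) (a : ℝ) (ha : 1 < a) (x : ℕ → Bool) (p : ℕ) (hp : p < n)
    (hxp : x p = false) :
    (∀ q, q < n → q ≠ p → x q = true →
        advW a x q ≤ a ^ (-((2:ℝ) ^ n)⁻¹) * advW a x p) ∧
    (∑ q ∈ Finset.range n, if x q then advW a x q else 0) ≤
      (n : ℝ) * a ^ (-((2:ℝ) ^ n)⁻¹) * advW a x p := by
  have ha0 : (0:ℝ) < a := lt_trans one_pos ha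
  have key : ∀ q, q < n → q ≠ p → x q = true →
      advW a x q ≤ a ^ (-((2:ℝ) ^ n)⁻¹) * advW a x p := by
    intro q hq hqp hxq
    rw [advW_eq_rpow a ha0, advW_eq_rpow a ha0, ← Real.rpow_add ha0]
    apply Real.rpow_le_rpow_of_exponent_le ha.le
    have := advE_key x n p q hp hq hqp hxp hxq
    linarith
  refine ⟨key, ?_⟩
  have hC : 0 < a ^ (-((2:ℝ) ^ n)⁻¹) * advW a x p := by
    rw [advW_eq_rpow a ha0]
    exact mul_pos (Real.rpow_pos_of_pos ha0 _) (Real.rpow_pos_of_pos ha0 _)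
  calc (∑ q ∈ Finset.range n, if x q then advW a x q else 0)
      ≤ ∑ q ∈ Finset.range n, a ^ (-((2:ℝ) ^ n)⁻¹) * advW a x p := by
        apply Finset.sum_le_sum
        intro q hq
        rw [Finset.mem_range] at hq
        by_cases hxq : x q = true
        · rw [if_pos hxq]
          rcases eq_or_ne q p with rfl | hqp
          · rw [hxp] at hxq; exact absurd hxq (by simp)
          · exact key q hq hqp hxq
        · rw [if_neg hxq]; exact hC.le
    _ = (n : ℝ) * a ^ (-((2:ℝ) ^ n)⁻¹) * advW a x p := by
        rw [Finset.sum_const, Finset.card_range, nsmul_eq_mul, mul_assoc]
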